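/- arXiv:1412.4309 — 2 statements merged into one kernel-verified Lean document; each statement's English description precedes it below -/
import Mathlib

section
/- The function f_K(x;a) = √(1−a²) / (π(1−x²)√(a²−x²)) on (−a,a) (and 0 outside) is a probability density on ℝ multiplied by weights: specifically, for 0 < a < 1, ∫_{−a}^{a} √(1−a²)/(π(1−x²)√(a²−x²)) dx = 1. -/
/-!
With `c = √(1 - a²)`, the integrand is the derivative of `arcsin (c x / (a √(1 - x²))) / π`
on `(-a, a)`: the identity `a²(1 - x²) - c²x² = a² - x²` turns `1 - (c x / (a √(1 - x²)))²`
into `(a² - x²) / (a²(1 - x²))`. The arcsine argument runs from `-1` to `1`, so the integral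
is `(π/2 - (-π/2)) / π = 1`. The integrand is positive, which gives its integrability for free.
-/

open Real Set MeasureTheory

theorem intervalIntegral.integral_eq_sub_of_hasDerivAt_of_nonneg {f f' : ℝ → ℝ} {a b : ℝ}
    (hab : a ≤ b) (hcont : ContinuousOn f (Icc a b))
    (hderiv : ∀ x ∈ Ioo a b, HasDerivAt f (f' x) x) (hnonneg : ∀ x ∈ Ioo a b, 0 ≤ f' x) :
    ∫ y in a..b, f' y = f b - f a := by
  refine integral_eq_sub_of_hasDerivAt_of_le hab hcont hderiv ?_
  rw [intervalIntegrable_iff_integrableOn_Ioc_of_le hab]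
  exact integrableOn_deriv_of_nonneg hcont hderiv hnonneg

namespace Konno

noncomputable def arcsinArg (a x : ℝ) : ℝ := √(1 - a ^ 2) * x / (a * √(1 - x ^ 2))

lemma arcsinArg_neg (a x : ℝ) : arcsinArg a (-x) = -arcsinArg a x := by
  simp only [arcsinArg, neg_sq]
  ring

variable {a x : ℝ}

lemma arcsinArg_self (ha0 : 0 < a) (ha1 : a < 1) : arcsinArg a a = 1 := by
  have : 0 < √(1 - a ^ 2) := sqrt_pos.mpr (by nlinarith)
  rw [arcsinArg, div_eq_one_iff_eq (by positivity)]
  ring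

lemma one_sub_arcsinArg_sq (ha0 : a ≠ 0) (ha1 : a ^ 2 ≤ 1) (hx : x ^ 2 < 1) :
    1 - arcsinArg a x ^ 2 = (a ^ 2 - x ^ 2) / (a ^ 2 * (1 - x ^ 2)) := by
  have hx' : 0 < 1 - x ^ 2 := by linarith
  rw [arcsinArg, div_pow, mul_pow, mul_pow, sq_sqrt (by linarith), sq_sqrt hx'.le]
  field_simp
  ring

lemma sqrt_one_sub_arcsinArg_sq (ha0 : 0 < a) (ha1 : a < 1) (hx : x ∈ Ioo (-a) a) :
    √(1 - arcsinArg a x ^ 2) = √(a ^ 2 - x ^ 2) / (a * √(1 - x ^ 2)) := by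
  have hxa := sq_lt_sq' hx.1 hx.2
  rw [one_sub_arcsinArg_sq ha0.ne' (by nlinarith) (by nlinarith), sqrt_div (by linarith),
    sqrt_mul (sq_nonneg a), sqrt_sq ha0.le]

lemma hasDerivAt_arcsinArg (ha0 : a ≠ 0) (hx : x ^ 2 < 1) :
    HasDerivAt (arcsinArg a) (√(1 - a ^ 2) / (a * (1 - x ^ 2) * √(1 - x ^ 2))) x := by
  have hx' : 0 < 1 - x ^ 2 := by linarith
  have hs : 0 < √(1 - x ^ 2) := sqrt_pos.mpr hx'
  have hsq : √(1 - x ^ 2) ^ 2 = 1 - x ^ 2 := sq_sqrt hx'.le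
  have hsqrt : HasDerivAt (fun y : ℝ => √(1 - y ^ 2)) (-(2 * x) / (2 * √(1 - x ^ 2))) x := by
    have h := (hasDerivAt_pow 2 x).const_sub 1
    simp only [Nat.cast_ofNat] at h
    exact (h.sqrt hx'.ne').congr_deriv (by ring)
  refine (((hasDerivAt_id x).const_mul _).div (hsqrt.const_mul a) (by positivity)).congr_deriv ?_
  simp only [id_eq, mul_one]
  field_simp
  linear_combination (-√(1 - a ^ 2) * x ^ 2) * hsq

lemma continuousOn_arcsinArg (ha0 : 0 < a) (ha1 : a < 1) :
    ContinuousOn (arcsinArg a) (Icc (-a) a) := by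
  refine ContinuousOn.div (by fun_prop) (by fun_prop) fun x hx => ?_
  have : 0 < 1 - x ^ 2 := by nlinarith [sq_le_sq' hx.1 hx.2]
  positivity

lemma hasDerivAt_arcsin_arcsinArg (ha0 : 0 < a) (ha1 : a < 1) (hx : x ∈ Ioo (-a) a) :
    HasDerivAt (fun y => arcsin (arcsinArg a y))
      (√(1 - a ^ 2) / ((1 - x ^ 2) * √(a ^ 2 - x ^ 2))) x := by
  have hxa := sq_lt_sq' hx.1 hx.2
  have hx1 : x ^ 2 < 1 := by nlinarith
  have hu : arcsinArg a x ^ 2 < 1 := by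
    have : 0 < 1 - arcsinArg a x ^ 2 := by
      rw [one_sub_arcsinArg_sq ha0.ne' (by nlinarith) hx1]
      exact div_pos (by linarith) (mul_pos (by positivity) (by linarith))
    linarith
  have hu1 : arcsinArg a x ≠ 1 := fun h => by simp [h] at hu
  have hu2 : arcsinArg a x ≠ -1 := fun h => by simp [h] at hu
  refine ((hasDerivAt_arcsin hu2 hu1).comp x (hasDerivAt_arcsinArg ha0.ne' hx1)).congr_deriv ?_
  have : 0 < √(1 - x ^ 2) := sqrt_pos.mpr (by linarith)
  have : 0 < √(a ^ 2 - x ^ 2) := sqrt_pos.mpr (by linarith)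
  have : 0 < 1 - x ^ 2 := by linarith
  rw [sqrt_one_sub_arcsinArg_sq ha0 ha1 hx]
  field_simp

end Konno

open Konno in
theorem konno_density_integral (a : ℝ) (ha0 : 0 < a) (ha1 : a < 1) :
    ∫ x in (-a)..a, Real.sqrt (1 - a ^ 2) / (π * (1 - x ^ 2) * Real.sqrt (a ^ 2 - x ^ 2)) = 1 := by
  have hcont : ContinuousOn (fun x => arcsin (arcsinArg a x) / π) (Icc (-a) a) :=
    (continuous_arcsin.comp_continuousOn (continuousOn_arcsinArg ha0 ha1)).div_const π
  have hderiv : ∀ x ∈ Ioo (-a) a, HasDerivAt (fun x => arcsin (arcsinArg a x) / π)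
      (√(1 - a ^ 2) / (π * (1 - x ^ 2) * √(a ^ 2 - x ^ 2))) x := fun x hx =>
    ((hasDerivAt_arcsin_arcsinArg ha0 ha1 hx).div_const π).congr_deriv
      (by rw [div_div, mul_comm, mul_assoc])
  have hnonneg : ∀ x ∈ Ioo (-a) a, 0 ≤ √(1 - a ^ 2) / (π * (1 - x ^ 2) * √(a ^ 2 - x ^ 2)) :=
    fun x hx => by
      have : 0 < 1 - x ^ 2 := by nlinarith [sq_lt_sq' hx.1 hx.2]
      positivity
  rw [intervalIntegral.integral_eq_sub_of_hasDerivAt_of_nonneg (by linarith) hcont hderiv hnonneg,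
    arcsinArg_neg, arcsinArg_self ha0 ha1, arcsin_neg, arcsin_one]
  field_simp
  ring
end

section
/- For w(x) = 2(1 − x³ + x² − x)/(x² + 4), one has ∫_{−1/√2}^{1/√2} w(x) · f_K(x; 1/√2) dx = 3/5, where f_K(x;1/√2) = (1/√2)/(π(1−x²)√(1/2 − x²)). -/
/-!
Dividing the weight by `1 - x²` and splitting into partial fractions,
`2(1 - x³ + x² - x) / ((x² + 4)(1 - x²)) = (4/5) / (1 + x) + (6/5) (x - 1) / (x² + 4)`.
Against the even factor `1 / √(a² - x²)` (`a = 1/√2`) the odd part `x / (x² + 4)` integrates to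
zero, and the two remaining integrals have arcsin antiderivatives whose arguments reach `±1`
exactly at `x = ±a`, so they extend continuously to `[-a, a]` and the fundamental theorem of
calculus applies (the integrands are nonnegative, hence integrable):
`∫_{-a}^{a} dx / ((1 + x)√(a² - x²)) = π / √(1 - a²)` and
`∫_{-a}^{a} dx / ((x² + c²)√(a² - x²)) = π / (c √(a² + c²))`.
-/

open Real Set MeasureTheory

theorem intervalIntegral.integral_neg_self_eq_zero_of_odd {f : ℝ → ℝ}
    (hf : ∀ x, f (-x) = -f x) (a : ℝ) : ∫ x in -a..a, f x = 0 := by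
  have h := intervalIntegral.integral_comp_neg (a := -a) (b := a) f
  simp only [hf, intervalIntegral.integral_neg, neg_neg] at h
  linarith

theorem intervalIntegrable_deriv_of_nonneg_of_le {g g' : ℝ → ℝ} {a b : ℝ} (hab : a ≤ b)
    (hcont : ContinuousOn g (Icc a b)) (hderiv : ∀ x ∈ Ioo a b, HasDerivAt g (g' x) x)
    (hpos : ∀ x ∈ Ioo a b, 0 ≤ g' x) : IntervalIntegrable g' volume a b :=
  (intervalIntegrable_iff_integrableOn_Ioc_of_le hab).2
    (intervalIntegral.integrableOn_deriv_of_nonneg hcont hderiv hpos)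

section

variable {a x : ℝ}

lemma sq_sub_sq_pos_of_mem_Ioo (hx : x ∈ Ioo (-a) a) : 0 < a ^ 2 - x ^ 2 := by
  nlinarith [hx.1, hx.2]

theorem hasDerivAt_arcsin_sq_add_div (ha : a < 1) (hx : x ∈ Ioo (-a) a) :
    HasDerivAt (fun y => arcsin ((a ^ 2 + y) / (a * (1 + y))) / √(1 - a ^ 2))
      (1 / ((1 + x) * √(a ^ 2 - x ^ 2))) x := by
  have ha0 : 0 < a := by linarith [hx.1, hx.2]
  have hx1 : 0 < 1 + x := by linarith [hx.1]
  have hs : 0 < a ^ 2 - x ^ 2 := sq_sub_sq_pos_of_mem_Ioo hx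
  have hb : 0 < 1 - a ^ 2 := by nlinarith
  set s := √(a ^ 2 - x ^ 2)
  set b := √(1 - a ^ 2)
  have hs0 : 0 < s := sqrt_pos.2 hs
  have hb0 : 0 < b := sqrt_pos.2 hb
  have hss : s ^ 2 = a ^ 2 - x ^ 2 := sq_sqrt hs.le
  have hbb : b ^ 2 = 1 - a ^ 2 := sq_sqrt hb.le
  have hu : HasDerivAt (fun y => (a ^ 2 + y) / (a * (1 + y)))
      ((1 * (a * (1 + x)) - (a ^ 2 + x) * (a * 1)) / (a * (1 + x)) ^ 2) x :=
    ((hasDerivAt_id x).const_add _).div (((hasDerivAt_id x).const_add 1).const_mul a)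
      (by positivity)
  have h1u : 1 - ((a ^ 2 + x) / (a * (1 + x))) ^ 2 = (b * s / (a * (1 + x))) ^ 2 := by
    rw [div_pow, div_pow, mul_pow b s, hss, hbb]
    field_simp
    ring
  have hlt : ((a ^ 2 + x) / (a * (1 + x))) ^ 2 < 1 := by
    nlinarith [h1u, pow_pos (div_pos (mul_pos hb0 hs0) (mul_pos ha0 hx1)) 2]
  have hne1 : (a ^ 2 + x) / (a * (1 + x)) ≠ 1 := by rintro h; rw [h] at hlt; norm_num at hlt
  have hne1' : (a ^ 2 + x) / (a * (1 + x)) ≠ -1 := by rintro h; rw [h] at hlt; norm_num at hlt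
  refine (((hasDerivAt_arcsin hne1' hne1).comp x hu).div_const b).congr_deriv ?_
  rw [h1u, sqrt_sq (by positivity)]
  field_simp
  linear_combination -hbb

theorem continuousOn_arcsin_sq_add_div (ha0 : 0 < a) (ha1 : a < 1) :
    ContinuousOn (fun y => arcsin ((a ^ 2 + y) / (a * (1 + y))) / √(1 - a ^ 2)) (Icc (-a) a) := by
  refine (continuous_arcsin.comp_continuousOn
    (ContinuousOn.div (by fun_prop) (by fun_prop) ?_)).div_const _
  intro y hy
  have : 0 < 1 + y := by linarith [hy.1]
  positivity

theorem intervalIntegrable_inv_one_add_mul_sqrt (ha0 : 0 < a) (ha1 : a < 1) :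
    IntervalIntegrable (fun x => 1 / ((1 + x) * √(a ^ 2 - x ^ 2))) volume (-a) a := by
  refine intervalIntegrable_deriv_of_nonneg_of_le (by linarith)
    (continuousOn_arcsin_sq_add_div ha0 ha1) (fun x hx => hasDerivAt_arcsin_sq_add_div ha1 hx)
    fun x hx => ?_
  have : 0 < 1 + x := by linarith [hx.1]
  positivity

theorem integral_inv_one_add_mul_sqrt (ha0 : 0 < a) (ha1 : a < 1) :
    ∫ x in -a..a, 1 / ((1 + x) * √(a ^ 2 - x ^ 2)) = π / √(1 - a ^ 2) := by
  rw [intervalIntegral.integral_eq_sub_of_hasDerivAt_of_le (by linarith)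
    (continuousOn_arcsin_sq_add_div ha0 ha1) (fun x hx => hasDerivAt_arcsin_sq_add_div ha1 hx)
    (intervalIntegrable_inv_one_add_mul_sqrt ha0 ha1)]
  have h1 : (a ^ 2 + a) / (a * (1 + a)) = 1 := by field_simp; ring
  have h2 : (a ^ 2 + -a) / (a * (1 + -a)) = -1 := by
    rw [div_eq_iff (by nlinarith)]
    ring
  rw [h1, h2, arcsin_one, arcsin_neg_one]
  ring

theorem hasDerivAt_arcsin_mul_div_sqrt {c : ℝ} (hc : 0 < c) (hx : x ∈ Ioo (-a) a) :
    HasDerivAt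
      (fun y => arcsin (√(a ^ 2 + c ^ 2) * y / (a * √(y ^ 2 + c ^ 2))) / (c * √(a ^ 2 + c ^ 2)))
      (1 / ((x ^ 2 + c ^ 2) * √(a ^ 2 - x ^ 2))) x := by
  have ha0 : 0 < a := by linarith [hx.1, hx.2]
  have hs : 0 < a ^ 2 - x ^ 2 := sq_sub_sq_pos_of_mem_Ioo hx
  have hq : 0 < x ^ 2 + c ^ 2 := by positivity
  have hk : 0 < a ^ 2 + c ^ 2 := by positivity
  set s := √(a ^ 2 - x ^ 2)
  set q := √(x ^ 2 + c ^ 2)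
  set k := √(a ^ 2 + c ^ 2)
  have hs0 : 0 < s := sqrt_pos.2 hs
  have hq0 : 0 < q := sqrt_pos.2 hq
  have hk0 : 0 < k := sqrt_pos.2 hk
  have hss : s ^ 2 = a ^ 2 - x ^ 2 := sq_sqrt hs.le
  have hqq : q ^ 2 = x ^ 2 + c ^ 2 := sq_sqrt hq.le
  have hkk : k ^ 2 = a ^ 2 + c ^ 2 := sq_sqrt hk.le
  have hq' : HasDerivAt (fun y => √(y ^ 2 + c ^ 2)) (1 / (2 * q) * (2 * x)) x := by
    refine (hasDerivAt_sqrt hq.ne').comp x ?_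
    simpa using (hasDerivAt_pow 2 x).add_const (c ^ 2)
  have hv : HasDerivAt (fun y => k * y / (a * √(y ^ 2 + c ^ 2)))
      ((k * 1 * (a * q) - k * x * (a * (1 / (2 * q) * (2 * x)))) / (a * q) ^ 2) x :=
    ((hasDerivAt_id x).const_mul k).div (hq'.const_mul a) (by positivity)
  have h1v : 1 - (k * x / (a * q)) ^ 2 = (c * s / (a * q)) ^ 2 := by
    rw [div_pow, div_pow, mul_pow c s, mul_pow k x, hss, hkk, mul_pow a q, hqq]
    field_simp
    ring
  have hlt : (k * x / (a * q)) ^ 2 < 1 := by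
    nlinarith [h1v, pow_pos (div_pos (mul_pos hc hs0) (mul_pos ha0 hq0)) 2]
  have hne1 : k * x / (a * q) ≠ 1 := by rintro h; rw [h] at hlt; norm_num at hlt
  have hne1' : k * x / (a * q) ≠ -1 := by rintro h; rw [h] at hlt; norm_num at hlt
  refine (((hasDerivAt_arcsin hne1' hne1).comp x hv).div_const (c * k)).congr_deriv ?_
  rw [h1v, sqrt_sq (by positivity)]
  field_simp
  rw [hqq]
  ring

theorem continuousOn_arcsin_mul_div_sqrt {c : ℝ} (ha0 : 0 < a) (hc : 0 < c) :
    ContinuousOn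
      (fun y => arcsin (√(a ^ 2 + c ^ 2) * y / (a * √(y ^ 2 + c ^ 2))) / (c * √(a ^ 2 + c ^ 2)))
      (Icc (-a) a) :=
  (continuous_arcsin.comp_continuousOn
    (ContinuousOn.div (by fun_prop) (by fun_prop) fun y _ => by positivity)).div_const _

theorem intervalIntegrable_inv_sq_add_sq_mul_sqrt {c : ℝ} (ha0 : 0 < a) (hc : 0 < c) :
    IntervalIntegrable (fun x => 1 / ((x ^ 2 + c ^ 2) * √(a ^ 2 - x ^ 2))) volume (-a) a :=
  intervalIntegrable_deriv_of_nonneg_of_le (by linarith) (continuousOn_arcsin_mul_div_sqrt ha0 hc)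
    (fun x hx => hasDerivAt_arcsin_mul_div_sqrt hc hx) fun x _ => by positivity

theorem integral_inv_sq_add_sq_mul_sqrt {c : ℝ} (ha0 : 0 < a) (hc : 0 < c) :
    ∫ x in -a..a, 1 / ((x ^ 2 + c ^ 2) * √(a ^ 2 - x ^ 2)) = π / (c * √(a ^ 2 + c ^ 2)) := by
  rw [intervalIntegral.integral_eq_sub_of_hasDerivAt_of_le (by linarith)
    (continuousOn_arcsin_mul_div_sqrt ha0 hc) (fun x hx => hasDerivAt_arcsin_mul_div_sqrt hc hx)
    (intervalIntegrable_inv_sq_add_sq_mul_sqrt ha0 hc)]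
  have hk : 0 < √(a ^ 2 + c ^ 2) := by positivity
  have h1 : √(a ^ 2 + c ^ 2) * a / (a * √(a ^ 2 + c ^ 2)) = 1 := by field_simp
  have h2 : √(a ^ 2 + c ^ 2) * -a / (a * √((-a) ^ 2 + c ^ 2)) = -1 := by
    rw [neg_sq]; field_simp
  rw [h1, h2, arcsin_one, arcsin_neg_one]
  ring

end

theorem weight_mul_density_eq (x : ℝ) :
    2 * (1 - x ^ 3 + x ^ 2 - x) / (x ^ 2 + 4) *
        (1 / √2 / (π * (1 - x ^ 2) * √(1 / 2 - x ^ 2))) =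
      1 / (√2 * π) * (4 / 5 * (1 / ((1 + x) * √(1 / 2 - x ^ 2)))
        + 6 / 5 * (x * (1 / ((x ^ 2 + 2 ^ 2) * √(1 / 2 - x ^ 2))))
        - 6 / 5 * (1 / ((x ^ 2 + 2 ^ 2) * √(1 / 2 - x ^ 2)))) := by
  rcases eq_or_ne √(1 / 2 - x ^ 2) 0 with hs | hs
  · simp only [hs, mul_zero, div_zero, add_zero, sub_zero]
  have hx : 0 < 1 / 2 - x ^ 2 := sqrt_ne_zero'.1 hs
  have h1 : 1 + x ≠ 0 := by nlinarith
  have h2 : 1 - x ^ 2 ≠ 0 := by nlinarith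
  field_simp
  ring

theorem weight_integral_example :
    ∫ x in (-(1 / Real.sqrt 2))..(1 / Real.sqrt 2),
      (2 * (1 - x ^ 3 + x ^ 2 - x) / (x ^ 2 + 4)) *
        ((1 / Real.sqrt 2) / (π * (1 - x ^ 2) * Real.sqrt (1 / 2 - x ^ 2))) = 3 / 5 := by
  have ha0 : 0 < 1 / √2 := by positivity
  have ha1 : 1 / √2 < 1 := by rw [div_lt_one (by positivity), lt_sqrt zero_le_one]; norm_num
  have ha2 : (1 / √2) ^ 2 = 1 / 2 := by rw [div_pow, sq_sqrt zero_le_two, one_pow]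
  have hodd := intervalIntegral.integral_neg_self_eq_zero_of_odd
    (f := fun x => x * (1 / ((x ^ 2 + 2 ^ 2) * √(1 / 2 - x ^ 2)))) (fun x => by simp) (1 / √2)
  have hi₁ := intervalIntegrable_inv_one_add_mul_sqrt ha0 ha1
  have hi₂ := intervalIntegrable_inv_sq_add_sq_mul_sqrt ha0 two_pos
  have hI₁ := integral_inv_one_add_mul_sqrt ha0 ha1
  have hI₂ := integral_inv_sq_add_sq_mul_sqrt ha0 two_pos
  rw [ha2] at hi₁ hi₂ hI₁ hI₂
  have hs₁ : √(1 - 1 / 2) = √2 / 2 := by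
    rw [show (1 - 1 / 2 : ℝ) = (√2 / 2) ^ 2 by rw [div_pow, sq_sqrt zero_le_two]; norm_num]
    exact sqrt_sq (by positivity)
  have hs₂ : √(1 / 2 + 2 ^ 2) = 3 * √2 / 2 := by
    rw [show (1 / 2 + 2 ^ 2 : ℝ) = (3 * √2 / 2) ^ 2 by
      rw [div_pow, mul_pow, sq_sqrt zero_le_two]; norm_num]
    exact sqrt_sq (by positivity)
  have hi₃ := hi₂.continuousOn_mul (continuousOn_id' _)
  simp only [weight_mul_density_eq]
  rw [intervalIntegral.integral_const_mul,
    intervalIntegral.integral_sub ((hi₁.const_mul _).add (hi₃.const_mul _)) (hi₂.const_mul _),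
    intervalIntegral.integral_add (hi₁.const_mul _) (hi₃.const_mul _),
    intervalIntegral.integral_const_mul, intervalIntegral.integral_const_mul,
    intervalIntegral.integral_const_mul, hI₁, hI₂, hodd, hs₁, hs₂]
  field_simp
  ring_nf
  rw [sq_sqrt zero_le_two]
  ring
end
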